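/- With z_b defined as the n-fold recursive application of f(w)=w√(2−w²) (bit 0) and g(w)=w² (bit 1) to z ∈ [0,1], if b and b' differ in exactly one position where b has bit 1 and b' has bit 0 (and agree elsewhere), then z_b ≤ z_{b'}. -/
import Mathlib


/-- One polarization step on the Bhattacharyya parameter: bit `false` ('minus')
maps `w` to `w√(2 − w²)`, bit `true` ('plus') maps `w` to `w²`. -/
noncomputable def polarStep (w : ℝ) (b : Bool) : ℝ :=
  if b then w^2 else w * Real.sqrt (2 - w^2)

lemma polarStep_false_eq (w : ℝ) (hw : 0 ≤ w) :
    polarStep w false = Real.sqrt (w^2 * (2 - w^2)) := by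
  simp only [polarStep, if_neg Bool.false_ne_true]
  rw [Real.sqrt_mul (sq_nonneg w), Real.sqrt_sq hw]

lemma polarStep_mem (w : ℝ) (hw : w ∈ Set.Icc (0:ℝ) 1) (b : Bool) :
    polarStep w b ∈ Set.Icc (0:ℝ) 1 := by
  obtain ⟨h0, h1⟩ := hw
  cases b with
  | true =>
    simp only [polarStep, if_true]
    constructor
    · positivity
    · nlinarith
  | false =>
    rw [polarStep_false_eq w h0]
    constructor
    · positivity
    · rw [show (1:ℝ) = Real.sqrt 1 by simp]
      apply Real.sqrt_le_sqrt
      nlinarith [sq_nonneg (1 - w^2)]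

lemma polarStep_mono {a b : ℝ} (ha : a ∈ Set.Icc (0:ℝ) 1) (hb : b ∈ Set.Icc (0:ℝ) 1)
    (hab : a ≤ b) (c : Bool) : polarStep a c ≤ polarStep b c := by
  obtain ⟨ha0, ha1⟩ := ha
  obtain ⟨hb0, hb1⟩ := hb
  cases c with
  | true =>
    simp only [polarStep, if_true]
    nlinarith
  | false =>
    rw [polarStep_false_eq a ha0, polarStep_false_eq b hb0]
    apply Real.sqrt_le_sqrt
    nlinarith [mul_nonneg (mul_nonneg (sub_nonneg.2 hab) (add_nonneg ha0 hb0))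
      (by nlinarith : (0:ℝ) ≤ 2 - a^2 - b^2)]

lemma foldl_mem (l : List Bool) : ∀ w ∈ Set.Icc (0:ℝ) 1,
    l.foldl polarStep w ∈ Set.Icc (0:ℝ) 1 := by
  induction l with
  | nil => intro w hw; simpa using hw
  | cons c t ih =>
    intro w hw
    simpa using ih _ (polarStep_mem w hw c)

lemma foldl_mono (l : List Bool) : ∀ a b : ℝ, a ∈ Set.Icc (0:ℝ) 1 →
    b ∈ Set.Icc (0:ℝ) 1 → a ≤ b →
    l.foldl polarStep a ≤ l.foldl polarStep b := by
  induction l with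
  | nil => intro a b _ _ h; simpa using h
  | cons c t ih =>
    intro a b ha hb hab
    simpa using ih _ _ (polarStep_mem a ha c) (polarStep_mem b hb c)
      (polarStep_mono ha hb hab c)

/-- If index strings `b = pre ++ [1] ++ suf` and `b' = pre ++ [0] ++ suf`
differ only in one position, where `b` has a 'plus' (1) and `b'` a 'minus' (0),
then `z_b ≤ z_{b'}`. -/
theorem polar_fold_plus_le_minus (z : ℝ) (hz : z ∈ Set.Icc (0:ℝ) 1)
    (pre suf : List Bool) :
    (pre ++ true :: suf).foldl polarStep z ≤
      (pre ++ false :: suf).foldl polarStep z := by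
  rw [List.foldl_append, List.foldl_append, List.foldl_cons, List.foldl_cons]
  set w := pre.foldl polarStep z with hw
  have hwm : w ∈ Set.Icc (0:ℝ) 1 := foldl_mem pre z hz
  obtain ⟨h0, h1⟩ := hwm
  have key : polarStep w true ≤ polarStep w false := by
    simp only [polarStep, if_true, if_neg Bool.false_ne_true]
    have hs : w ≤ Real.sqrt (2 - w^2) := by
      have h := Real.sqrt_le_sqrt (show w^2 ≤ 2 - w^2 by nlinarith)
      rwa [Real.sqrt_sq h0] at h
    calc w^2 = w * w := sq w
    _ ≤ w * Real.sqrt (2 - w^2) := by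
        apply mul_le_mul_of_nonneg_left hs h0
  exact foldl_mono suf _ _ (polarStep_mem w ⟨h0, h1⟩ true)
    (polarStep_mem w ⟨h0, h1⟩ false) key
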